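/- arXiv:0911.1007 — 7 statements merged into one kernel-verified Lean document; each statement's English description precedes it below -/
import Mathlib

section
/- For every τ with 0 < τ < 1/2, τ ≠ 1/3, the parameter values a = τ² - 2τ³, β = δ/(2τ(1-τ)²) (for any δ > 0) are positive, and x₀ = τ is a double root of the cubic F(x) = x³ - x² + (a + δ/β)x - a, i.e., F(τ) = 0 and F'(τ) = 0. -/
theorem hasDerivAt_cubic (b c x : ℝ) :
    HasDerivAt (fun x => x ^ 3 - x ^ 2 + b * x - c) (3 * x ^ 2 - 2 * x + b) x := by
  simpa using (((hasDerivAt_pow 3 x).sub (hasDerivAt_pow 2 x)).add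
    ((hasDerivAt_id x).const_mul b)).sub_const c

theorem sq_sub_two_mul_pow_three_pos {τ : ℝ} (h0 : 0 < τ) (h1 : τ < 1 / 2) :
    0 < τ ^ 2 - 2 * τ ^ 3 := by
  have : 0 < 1 - 2 * τ := by linarith
  calc 0 < τ ^ 2 * (1 - 2 * τ) := by positivity
    _ = τ ^ 2 - 2 * τ ^ 3 := by ring

theorem stmt5_general (τ δ : ℝ) (hτ0 : 0 < τ) (hτ1 : τ < 1 / 2)
    (hδ : 0 < δ) :
    let a : ℝ := τ ^ 2 - 2 * τ ^ 3
    let β : ℝ := δ / (2 * τ * (1 - τ) ^ 2)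
    let F : ℝ → ℝ := fun x => x ^ 3 - x ^ 2 + (a + δ / β) * x - a
    0 < a ∧ 0 < β ∧ F τ = 0 ∧ deriv F τ = 0 := by
  intro a β F
  have hden : 0 < 2 * τ * (1 - τ) ^ 2 := by
    have : 0 < 1 - τ := by linarith
    positivity
  have hδβ : δ / β = 2 * τ * (1 - τ) ^ 2 := div_div_cancel₀ hδ.ne'
  refine ⟨sq_sub_two_mul_pow_three_pos hτ0 hτ1, div_pos hδ hden, ?_, ?_⟩
  · simp only [F, hδβ, a]
    ring
  · rw [(hasDerivAt_cubic _ a τ).deriv, hδβ]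
    ring

/-- For every `τ ∈ (0, 1/2)` with `τ ≠ 1/3`, and any `δ > 0`, the parameters
`a = τ² - 2τ³`, `β = δ/(2τ(1-τ)²)` are positive and `x₀ = τ` is a double root
of the cubic `F(x) = x³ - x² + (a + δ/β)x - a`: `F(τ) = 0` and `F'(τ) = 0`. -/
theorem stmt5 (τ δ : ℝ) (hτ0 : 0 < τ) (hτ1 : τ < 1 / 2) (hτ3 : τ ≠ 1 / 3)
    (hδ : 0 < δ) :
    let a : ℝ := τ ^ 2 - 2 * τ ^ 3
    let β : ℝ := δ / (2 * τ * (1 - τ) ^ 2)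
    let F : ℝ → ℝ := fun x => x ^ 3 - x ^ 2 + (a + δ / β) * x - a
    0 < a ∧ 0 < β ∧ F τ = 0 ∧ deriv F τ = 0 :=
  stmt5_general τ δ hτ0 hτ1 hδ
end

section
/- Conversely, if a, β, δ > 0 and x₀ ∈ (0,1) satisfy F(x₀) = 0 and F'(x₀) = 0 for F(x) = x³ - x² + (a + δ/β)x - a, then a = x₀² - 2x₀³ and β = δ/(2x₀(1-x₀)²), and necessarily 0 < x₀ < 1/2. -/
/-! Differentiating `F` gives `3x₀² - 2x₀ + (a + δ/β) = 0`; eliminating the linear coefficient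
between this and `F(x₀) = 0` leaves `a = x₀²(1 - 2x₀)`, whence `x₀ < 1/2` since `a > 0`, and then
`δ/β = 2x₀(1 - x₀)²`, which is nonzero on `(0,1)` and can be solved for `β`. -/

lemma deriv_cubic (c a x : ℝ) :
    deriv (fun x : ℝ => x ^ 3 - x ^ 2 + c * x - a) x = 3 * x ^ 2 - 2 * x + c := by
  have h := (((hasDerivAt_pow 3 x).sub (hasDerivAt_pow 2 x)).add
    ((hasDerivAt_id x).const_mul c)).sub_const a
  convert h.deriv using 1 <;> norm_num

lemma cubic_double_root_coeffs {R : Type*} [CommRing R] {c a x₀ : R} (hF : x₀ ^ 3 - x₀ ^ 2 + c * x₀ - a = 0)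
    (hF' : 3 * x₀ ^ 2 - 2 * x₀ + c = 0) :
    a = x₀ ^ 2 - 2 * x₀ ^ 3 ∧ c - a = 2 * x₀ * (1 - x₀) ^ 2 := by
  have hc : c = 2 * x₀ - 3 * x₀ ^ 2 := by linear_combination hF'
  subst hc
  exact ⟨by linear_combination -hF, by linear_combination hF⟩

lemma eq_div_of_div_eq_of_ne_zero {K : Type*} [Field K] {δ β k : K} (h : δ / β = k) (hk : k ≠ 0) : β = δ / k := by
  have hδ : δ ≠ 0 := by rintro rfl; simp [eq_comm, hk] at h
  rw [← h, div_div_cancel₀ hδ]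

theorem stmt6_general (a β δ x₀ : ℝ) (ha : 0 < a)
    (hx : x₀ ∈ Set.Ioo (0:ℝ) 1)
    (hF : x₀ ^ 3 - x₀ ^ 2 + (a + δ / β) * x₀ - a = 0)
    (hF' : deriv (fun x : ℝ => x ^ 3 - x ^ 2 + (a + δ / β) * x - a) x₀ = 0) :
    a = x₀ ^ 2 - 2 * x₀ ^ 3 ∧ β = δ / (2 * x₀ * (1 - x₀) ^ 2) ∧ x₀ < 1 / 2 := by
  obtain ⟨hx0, hx1⟩ := hx
  rw [deriv_cubic] at hF'
  obtain ⟨ha_eq, hδβ⟩ := cubic_double_root_coeffs hF hF'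
  rw [add_sub_cancel_left] at hδβ
  have hk : 2 * x₀ * (1 - x₀) ^ 2 ≠ 0 := by
    have : 0 < 1 - x₀ := by linarith
    positivity
  refine ⟨ha_eq, eq_div_of_div_eq_of_ne_zero hδβ hk, ?_⟩
  nlinarith

/-- If `a, β, δ > 0` and `x₀ ∈ (0,1)` is a double root of
`F(x) = x³ - x² + (a + δ/β)x - a` (i.e. `F(x₀) = F'(x₀) = 0`), then
`a = x₀² - 2x₀³`, `β = δ/(2x₀(1-x₀)²)`, and necessarily `x₀ < 1/2`. -/
theorem stmt6 (a β δ x₀ : ℝ) (ha : 0 < a) (hβ : 0 < β) (hδ : 0 < δ)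
    (hx : x₀ ∈ Set.Ioo (0:ℝ) 1)
    (hF : x₀ ^ 3 - x₀ ^ 2 + (a + δ / β) * x₀ - a = 0)
    (hF' : deriv (fun x : ℝ => x ^ 3 - x ^ 2 + (a + δ / β) * x - a) x₀ = 0) :
    a = x₀ ^ 2 - 2 * x₀ ^ 3 ∧ β = δ / (2 * x₀ * (1 - x₀) ^ 2) ∧ x₀ < 1 / 2 :=
  stmt6_general a β δ x₀ ha hx hF hF'
end

section
/- For 0 < τ < 1, setting a = τ² - 2τ³, β = 1/(2τ(1-τ)), δ = 1 - τ, and assuming a > 0 (i.e., τ < 1/2), the point (x₀, y₀) = (τ, δτ/β) is an equilibrium of the system at which the Jacobian matrix has both trace and determinant equal to zero (Bogdanov–Takens point). -/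
/-- For `0 < τ < 1` with `a = τ² - 2τ³ > 0` (i.e. `τ < 1/2`), `β = 1/(2τ(1-τ))`,
`δ = 1 - τ`, the point `(x₀,y₀) = (τ, δτ/β)` is an equilibrium of the system
`ẋ = x(1-x) - xy/(a+x²)`, `ẏ = y(δ - βy/x)` at which both the trace and the
determinant of the Jacobian vanish (Bogdanov–Takens point); the trace and
determinant are proportional to the stated polynomial expressions. -/
theorem stmt8 (τ : ℝ) (hτ0 : 0 < τ) (hτ1 : τ < 1) :
    let a : ℝ := τ ^ 2 - 2 * τ ^ 3
    let β : ℝ := 1 / (2 * τ * (1 - τ))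
    let δ : ℝ := 1 - τ
    0 < a →
    let x₀ : ℝ := τ
    let y₀ : ℝ := δ * τ / β
    -- (x₀, y₀) is an equilibrium:
    (x₀ * (1 - x₀) - x₀ * y₀ / (a + x₀ ^ 2) = 0 ∧ y₀ * (δ - β * y₀ / x₀) = 0) ∧
    -- the trace of the Jacobian vanishes (trace ∝ aδ + ax₀ - 2x₀² + δx₀² + 3x₀³):
    a * δ + a * x₀ - 2 * x₀ ^ 2 + δ * x₀ ^ 2 + 3 * x₀ ^ 3 = 0 ∧
    -- the determinant of the Jacobian vanishes:
    -a ^ 2 * β + 2 * a ^ 2 * β * x₀ + 2 * a * δ * x₀ - 2 * a * β * x₀ ^ 2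
      + 4 * a * β * x₀ ^ 3 - β * x₀ ^ 4 + 2 * β * x₀ ^ 5 = 0 := by
  dsimp only
  intro _
  have hτ : τ ≠ 0 := hτ0.ne'
  have hτ' : 1 - τ ≠ 0 := (sub_pos.2 hτ1).ne'
  have hβ : 1 / (2 * τ * (1 - τ)) * (2 * τ * (1 - τ)) = 1 :=
    one_div_mul_cancel (by positivity)
  have hy₀ : (1 - τ) * τ / (1 / (2 * τ * (1 - τ))) = 2 * τ ^ 2 * (1 - τ) ^ 2 := by
    rw [div_div_eq_mul_div, div_one]; ring
  have hden : τ ^ 2 - 2 * τ ^ 3 + τ ^ 2 = 2 * τ ^ 2 * (1 - τ) := by ring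
  refine ⟨⟨?_, ?_⟩, by ring, ?_⟩
  · rw [hy₀, hden]
    field_simp
    ring
  · rw [hy₀]
    field_simp
    ring
  -- The `β`-terms of the determinant sum to `-2τ(1-τ)β` times the remaining term `2aδτ`.
  · linear_combination (-2 * (τ ^ 2 - 2 * τ ^ 3) * (1 - τ) * τ) * hβ
end

section
/- For parameter values a = 1/27, β = 9/4, δ = 2/3, the point (x₀, y₀) = (1/3, (δ/β)·(1/3)) = (1/3, 8/81) is an equilibrium at which the Jacobian has trace zero and determinant zero, and x₀ = 1/3 is a triple root of F(x) = x³ - x² + (a + δ/β)x - a. -/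
/-- For `a = 1/27`, `β = 9/4`, `δ = 2/3`, the point
`(x₀, y₀) = (1/3, (δ/β)·(1/3)) = (1/3, 8/81)` is an equilibrium of the system
at which the Jacobian has zero trace and zero determinant (via the proportional
polynomial expressions), and `x₀ = 1/3` is a triple root of
`F(x) = x³ - x² + (a + δ/β)x - a`. -/
theorem stmt9 :
    let a : ℝ := 1 / 27
    let β : ℝ := 9 / 4
    let δ : ℝ := 2 / 3
    let x₀ : ℝ := 1 / 3
    let y₀ : ℝ := (δ / β) * (1 / 3)
    y₀ = 8 / 81 ∧
    (x₀ * (1 - x₀) - x₀ * y₀ / (a + x₀ ^ 2) = 0 ∧ y₀ * (δ - β * y₀ / x₀) = 0) ∧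
    a * δ + a * x₀ - 2 * x₀ ^ 2 + δ * x₀ ^ 2 + 3 * x₀ ^ 3 = 0 ∧
    -a ^ 2 * β + 2 * a ^ 2 * β * x₀ + 2 * a * δ * x₀ - 2 * a * β * x₀ ^ 2
      + 4 * a * β * x₀ ^ 3 - β * x₀ ^ 4 + 2 * β * x₀ ^ 5 = 0 ∧
    (∀ x : ℝ, x ^ 3 - x ^ 2 + (a + δ / β) * x - a = (x - x₀) ^ 3) := by
  refine ⟨by norm_num, ⟨by norm_num, by norm_num⟩, by norm_num, by norm_num,
    fun x => by ring⟩
end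

section
/- With a = -45 + 26√3, β = (5 + 3√3)/4, δ = √3 - 1, all three parameters are positive, and there exists x₀ ∈ (0,1) such that F(x₀) = F'(x₀) = 0 and the trace of the Jacobian at the corresponding equilibrium vanishes. -/
open Real

theorem deriv_sub_sq_mul_eq_zero {g : ℝ → ℝ} {u : ℝ} (hg : DifferentiableAt ℝ g u) :
    deriv (fun x => (x - u) ^ 2 * g x) u = 0 := by
  have h : HasDerivAt (fun x => (x - u) ^ 2 * g x)
      (2 * (u - u) ^ 1 * 1 * g u + (u - u) ^ 2 * deriv g u) u :=
    (((hasDerivAt_id' u).sub_const u).fun_pow 2).mul hg.hasDerivAt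
  simpa using h.deriv

/-- With `a = -45 + 26√3`, `β = (5 + 3√3)/4`, `δ = √3 - 1`, all three parameters
are positive, and there exists `x₀ ∈ (0,1)` with `F(x₀) = F'(x₀) = 0` and the
trace of the Jacobian at the corresponding equilibrium vanishing
(`aδ + ax₀ - 2x₀² + δx₀² + 3x₀³ = 0`). -/
theorem stmt10 :
    let a : ℝ := -45 + 26 * Real.sqrt 3
    let β : ℝ := (5 + 3 * Real.sqrt 3) / 4
    let δ : ℝ := Real.sqrt 3 - 1
    0 < a ∧ 0 < β ∧ 0 < δ ∧
    ∃ x₀ ∈ Set.Ioo (0:ℝ) 1,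
      x₀ ^ 3 - x₀ ^ 2 + (a + δ / β) * x₀ - a = 0 ∧
      deriv (fun x : ℝ => x ^ 3 - x ^ 2 + (a + δ / β) * x - a) x₀ = 0 ∧
      a * δ + a * x₀ - 2 * x₀ ^ 2 + δ * x₀ ^ 2 + 3 * x₀ ^ 3 = 0 := by
  dsimp only
  have hs : √3 ^ 2 = 3 := sq_sqrt (by norm_num)
  have h_lower : 45 / 26 < √3 := (lt_sqrt (by norm_num)).2 (by norm_num)
  have h_upper : √3 < 2 := (sqrt_lt' (by norm_num)).2 (by norm_num)
  have hδβ : (√3 - 1) / ((5 + 3 * √3) / 4) = 28 - 16 * √3 := by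
    rw [div_eq_iff (by positivity)]
    linear_combination 12 * hs
  have hF : (fun x : ℝ => x ^ 3 - x ^ 2 + (-45 + 26 * √3 + (√3 - 1) / ((5 + 3 * √3) / 4)) * x
      - (-45 + 26 * √3)) = fun x => (x - (2 - √3)) ^ 2 * (x - (2 * √3 - 3)) := by
    funext x
    rw [hδβ]
    linear_combination (3 * x + 2 * √3 - 11) * hs
  refine ⟨by linarith, by positivity, by linarith, 2 - √3, ⟨by linarith, by linarith⟩, ?_, ?_, ?_⟩
  · simpa using congrFun hF (2 - √3)
  · rw [hF]
    exact deriv_sub_sq_mul_eq_zero (by fun_prop)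
  · linear_combination (11 - 2 * √3) * hs
end

section
/- For 0 < τ < 1 with 2 - δ - 3τ > 0 and δ + τ > 0, setting a = τ²(2 - δ - 3τ)/(δ + τ) and β = δ(δ + τ)/(2τ(1-τ)²), the point x₀ = τ satisfies F(x₀) = 0 and the trace condition aδ + ax₀ - 2x₀² + δx₀² + 3x₀³ = 0. -/
/-! The parameter `a` is defined so that `a (δ + τ) = τ² (2 - δ - 3τ)`, which is exactly the trace
condition at `x₀ = τ`. For the cubic, `F(τ) = (τ - 1)(τ² + a) + (δ / β) τ`, where
`τ² + a = 2τ²(1 - τ) / (δ + τ)` and `δ / β = 2τ(1 - τ)² / (δ + τ)`, so the two terms cancel. -/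

theorem stmt11_general (τ δ : ℝ) (hδ : 0 < δ) (h2 : 0 < δ + τ) :
    let a : ℝ := τ ^ 2 * (2 - δ - 3 * τ) / (δ + τ)
    let β : ℝ := δ * (δ + τ) / (2 * τ * (1 - τ) ^ 2)
    let x₀ : ℝ := τ
    x₀ ^ 3 - x₀ ^ 2 + (a + δ / β) * x₀ - a = 0 ∧
    a * δ + a * x₀ - 2 * x₀ ^ 2 + δ * x₀ ^ 2 + 3 * x₀ ^ 3 = 0 := by
  intro a β x₀
  have ha : a * (δ + τ) = τ ^ 2 * (2 - δ - 3 * τ) := div_mul_cancel₀ _ h2.ne'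
  have hsq_add_a : τ ^ 2 + a = 2 * τ ^ 2 * (1 - τ) / (δ + τ) := by
    rw [eq_div_iff h2.ne']
    linear_combination ha
  have hδβ : δ / β = 2 * τ * (1 - τ) ^ 2 / (δ + τ) := by
    rw [div_div_eq_mul_div, mul_div_mul_left _ _ hδ.ne']
  exact ⟨by linear_combination (τ - 1) * hsq_add_a + τ * hδβ, by linear_combination ha⟩

/-- For `0 < τ < 1`, `δ > 0`, with `2 - δ - 3τ > 0` and `δ + τ > 0`, setting
`a = τ²(2 - δ - 3τ)/(δ + τ)` and `β = δ(δ + τ)/(2τ(1-τ)²)`, the point `x₀ = τ`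
satisfies `F(x₀) = 0` and the trace condition
`aδ + ax₀ - 2x₀² + δx₀² + 3x₀³ = 0` (Andronov–Hopf surface H). -/
theorem stmt11 (τ δ : ℝ) (hτ0 : 0 < τ) (hτ1 : τ < 1) (hδ : 0 < δ)
    (h1 : 0 < 2 - δ - 3 * τ) (h2 : 0 < δ + τ) :
    let a : ℝ := τ ^ 2 * (2 - δ - 3 * τ) / (δ + τ)
    let β : ℝ := δ * (δ + τ) / (2 * τ * (1 - τ) ^ 2)
    let x₀ : ℝ := τ
    x₀ ^ 3 - x₀ ^ 2 + (a + δ / β) * x₀ - a = 0 ∧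
    a * δ + a * x₀ - 2 * x₀ ^ 2 + δ * x₀ ^ 2 + 3 * x₀ ^ 3 = 0 :=
  stmt11_general τ δ hδ h2
end

section
/- At an equilibrium (x₀, y₀) with y₀ = (δ/β)x₀ satisfying F(x₀) = 0, the determinant of the Jacobian of the system equals a positive constant times -a²β + 2a²βx₀ + 2aδx₀ - 2aβx₀² + 4aβx₀³ - βx₀⁴ + 2βx₀⁵, and its trace equals a positive constant times aδ + ax₀ - 2x₀² + δx₀² + 3x₀³ (up to sign conventions given in the paper). -/
/-!
An interior equilibrium lies on both nullclines, `y = (δ/β) x` and `y = (1 - x)(a + x²)`, the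
latter being `F(x) = 0`. Equating them gives `δ = β (1 - x)(a + x²) / x`, which eliminates `y` and
`δ` from the explicit Jacobian; clearing the denominators `β (a + x²)²` and `a + x²` leaves the
two polynomials.
-/

open ContinuousLinearMap

noncomputable section

def predatorPreyField (a β δ : ℝ) (p : ℝ × ℝ) : ℝ × ℝ :=
  (p.1 * (1 - p.1) - p.1 * p.2 / (a + p.1 ^ 2), p.2 * (δ - β * p.2 / p.1))

def predatorPreyJacobian (a β δ x y : ℝ) : ℝ × ℝ →L[ℝ] ℝ × ℝ :=
  ((1 - 2 * x - y * (a - x ^ 2) / (a + x ^ 2) ^ 2) • fst ℝ ℝ ℝ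
      - (x / (a + x ^ 2)) • snd ℝ ℝ ℝ).prod
    ((β * y ^ 2 / x ^ 2) • fst ℝ ℝ ℝ + (δ - 2 * β * y / x) • snd ℝ ℝ ℝ)

end

section

variable {a β δ x y : ℝ}

theorem hasFDerivAt_predatorPreyField (hx : x ≠ 0) (hA : a + x ^ 2 ≠ 0) :
    HasFDerivAt (predatorPreyField a β δ) (predatorPreyJacobian a β δ x y) (x, y) := by
  have hfst : HasFDerivAt (fun p : ℝ × ℝ => p.1) (fst ℝ ℝ ℝ) (x, y) := hasFDerivAt_fst
  have hsnd : HasFDerivAt (fun p : ℝ × ℝ => p.2) (snd ℝ ℝ ℝ) (x, y) := hasFDerivAt_snd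
  have hinvA := (hasDerivAt_inv hA).comp_hasFDerivAt (x, y) ((hfst.pow 2).const_add a)
  have hinvx := (hasDerivAt_inv hx).comp_hasFDerivAt (x, y) hfst
  have h₁ := (hfst.fun_mul (hfst.const_sub 1)).fun_sub ((hfst.fun_mul hsnd).fun_mul hinvA)
  have h₂ := hsnd.fun_mul (((hsnd.const_mul β).fun_mul hinvx).const_sub δ)
  refine (h₁.prodMk h₂).congr_fderiv ?_ |>.congr_of_eventuallyEq
    (Filter.Eventually.of_forall fun p => by simp [predatorPreyField, div_eq_mul_inv])
  ext <;> simp [predatorPreyJacobian] <;> field_simp <;> ring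

@[simp]
theorem predatorPreyJacobian_apply_one_zero :
    predatorPreyJacobian a β δ x y (1, 0) =
      (1 - 2 * x - y * (a - x ^ 2) / (a + x ^ 2) ^ 2, β * y ^ 2 / x ^ 2) := by
  simp [predatorPreyJacobian]

@[simp]
theorem predatorPreyJacobian_apply_zero_one :
    predatorPreyJacobian a β δ x y (0, 1) = (-(x / (a + x ^ 2)), δ - 2 * β * y / x) := by
  simp [predatorPreyJacobian]

theorem delta_eq_of_nullclines (hx : x ≠ 0) (hβ : β ≠ 0)
    (hpred : y = δ / β * x) (hprey : y = (1 - x) * (a + x ^ 2)) :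
    δ = β * (1 - x) * (a + x ^ 2) / x := by
  rw [hprey] at hpred
  field_simp at hpred ⊢
  linarith

theorem trace_predatorPreyJacobian_of_nullclines (hx : x ≠ 0) (hβ : β ≠ 0) (hA : a + x ^ 2 ≠ 0)
    (hpred : y = δ / β * x) (hprey : y = (1 - x) * (a + x ^ 2)) :
    (predatorPreyJacobian a β δ x y (1, 0)).1 + (predatorPreyJacobian a β δ x y (0, 1)).2 =
      -(1 / (a + x ^ 2)) * (a * δ + a * x - 2 * x ^ 2 + δ * x ^ 2 + 3 * x ^ 3) := by
  simp only [predatorPreyJacobian_apply_one_zero, predatorPreyJacobian_apply_zero_one, hpred,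
    delta_eq_of_nullclines hx hβ hpred hprey]
  field_simp
  ring

theorem det_predatorPreyJacobian_of_nullclines (hx : x ≠ 0) (hβ : β ≠ 0) (hA : a + x ^ 2 ≠ 0)
    (hpred : y = δ / β * x) (hprey : y = (1 - x) * (a + x ^ 2)) :
    (predatorPreyJacobian a β δ x y (1, 0)).1 * (predatorPreyJacobian a β δ x y (0, 1)).2
        - (predatorPreyJacobian a β δ x y (1, 0)).2 * (predatorPreyJacobian a β δ x y (0, 1)).1 =
      δ / (β * (a + x ^ 2) ^ 2) * (-a ^ 2 * β + 2 * a ^ 2 * β * x + 2 * a * δ * x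
        - 2 * a * β * x ^ 2 + 4 * a * β * x ^ 3 - β * x ^ 4 + 2 * β * x ^ 5) := by
  simp only [predatorPreyJacobian_apply_one_zero, predatorPreyJacobian_apply_zero_one, hpred,
    delta_eq_of_nullclines hx hβ hpred hprey]
  field_simp
  ring

end

/-- At an equilibrium `(x₀, y₀)` with `y₀ = (δ/β)x₀` and `F(x₀) = 0`, the
determinant of the Jacobian of the vector field of system (2) equals a positive
constant times `-a²β + 2a²βx₀ + 2aδx₀ - 2aβx₀² + 4aβx₀³ - βx₀⁴ + 2βx₀⁵`, and
its trace equals a positive constant times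
`aδ + ax₀ - 2x₀² + δx₀² + 3x₀³` up to sign (the sign convention of the paper:
here the trace is `-k₂` times that expression with `k₂ > 0`). -/
theorem stmt17 (a β δ x₀ y₀ : ℝ) (ha : 0 < a) (hβ : 0 < β) (hδ : 0 < δ)
    (hx : x₀ ∈ Set.Ioo (0:ℝ) 1) (hy : y₀ = (δ / β) * x₀)
    (hF : x₀ ^ 3 - x₀ ^ 2 + (a + δ / β) * x₀ - a = 0) :
    let V : ℝ × ℝ → ℝ × ℝ := fun p =>
      (p.1 * (1 - p.1) - p.1 * p.2 / (a + p.1 ^ 2),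
        p.2 * (δ - β * p.2 / p.1))
    let J : ℝ × ℝ →L[ℝ] ℝ × ℝ := fderiv ℝ V (x₀, y₀)
    let trJ : ℝ := (J (1, 0)).1 + (J (0, 1)).2
    let detJ : ℝ := (J (1, 0)).1 * (J (0, 1)).2 - (J (1, 0)).2 * (J (0, 1)).1
    (∃ k₁ : ℝ, 0 < k₁ ∧
      detJ = k₁ * (-a ^ 2 * β + 2 * a ^ 2 * β * x₀ + 2 * a * δ * x₀
        - 2 * a * β * x₀ ^ 2 + 4 * a * β * x₀ ^ 3 - β * x₀ ^ 4
        + 2 * β * x₀ ^ 5)) ∧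
    (∃ k₂ : ℝ, 0 < k₂ ∧
      trJ = -k₂ * (a * δ + a * x₀ - 2 * x₀ ^ 2 + δ * x₀ ^ 2 + 3 * x₀ ^ 3)) := by
  intro V J trJ detJ
  have hx₀ : x₀ ≠ 0 := hx.1.ne'
  have hA : 0 < a + x₀ ^ 2 := by positivity
  have hprey : y₀ = (1 - x₀) * (a + x₀ ^ 2) := by rw [hy]; linear_combination hF
  have hJ : J = predatorPreyJacobian a β δ x₀ y₀ :=
    (hasFDerivAt_predatorPreyField hx₀ hA.ne').fderiv
  refine ⟨⟨δ / (β * (a + x₀ ^ 2) ^ 2), by positivity, ?_⟩, ⟨1 / (a + x₀ ^ 2), by positivity, ?_⟩⟩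
  · simp only [detJ, hJ]
    exact det_predatorPreyJacobian_of_nullclines hx₀ hβ.ne' hA.ne' hy hprey
  · simp only [trJ, hJ]
    exact trace_predatorPreyJacobian_of_nullclines hx₀ hβ.ne' hA.ne' hy hprey
end
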